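/- Let (ω¹, ω², ω³; I, 0, K) be an (I,0,K)-generalized Finsler structure (an (I,J,K)-generalized Finsler structure with J ≡ 0) on a smooth 3-manifold Σ, and let m be a smooth function on Σ. Then the pair of 1-forms (α¹, α²) := (ω², m·ω³) is a Cartan structure on Σ if and only if the following three conditions hold: m is nowhere vanishing on Σ, m₁ = 0, and m² = 1/K (in particular K > 0 everywhere), where m₁ is the directional derivative of m with respect to ω¹ defined by dm = m₁ω¹ + m₂ω² + m₃ω³. -/

import Mathlib

open Manifold

noncomputable section

/-- The model space `ℝ³` (as `EuclideanSpace ℝ (Fin 3)`). -/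
abbrev E3 : Type := EuclideanSpace ℝ (Fin 3)

variable {S : Type*} [TopologicalSpace S] [ChartedSpace E3 S]

/-- The representation of a 1-form `ω` on `S` in the chart at `x`:
the pullback of `ω` by the inverse of the chart. -/
def chartRep (ω : S → E3 →L[ℝ] ℝ) (x : S) : E3 → (E3 →L[ℝ] ℝ) :=
  fun u => (ω ((chartAt E3 x).symm u)).comp
    (mfderiv (𝓡 3) (𝓡 3) (chartAt E3 x).symm u)

/-- A 1-form is smooth if its chart representations are smooth. -/
def IsSmoothOneForm (ω : S → E3 →L[ℝ] ℝ) : Prop :=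
  ∀ x : S, ContDiffOn ℝ (⊤ : ℕ∞) (chartRep ω x) (chartAt E3 x).target

/-- The exterior derivative of a 1-form, as a (pointwise alternating) 2-form,
computed in the chart at the given point. -/
def extd (ω : S → E3 →L[ℝ] ℝ) (x : S) (v w : E3) : ℝ :=
  fderiv ℝ (fun u => chartRep ω x u w) (chartAt E3 x x) v
    - fderiv ℝ (fun u => chartRep ω x u v) (chartAt E3 x x) w

/-- The differential of a function, as a 1-form. -/
def dFun (f : S → ℝ) (x : S) : E3 →L[ℝ] ℝ :=
  mfderiv (𝓡 3) 𝓘(ℝ, ℝ) f x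

/-- Smoothness for real valued functions on the 3-manifold. -/
def IsSmoothFunction (f : S → ℝ) : Prop :=
  ContMDiff (𝓡 3) 𝓘(ℝ, ℝ) (⊤ : ℕ∞) f

/-- Wedge product of two 1-forms, as a 2-form. -/
def wedge1 (ω η : S → E3 →L[ℝ] ℝ) (x : S) (v w : E3) : ℝ :=
  ω x v * η x w - ω x w * η x v

/-- Wedge product of a 1-form and an (alternating) 2-form, as a 3-form. -/
def wedge12 (a : S → E3 →L[ℝ] ℝ) (β : S → E3 → E3 → ℝ) (x : S) (u v w : E3) : ℝ :=
  a x u * β x v w - a x v * β x u w + a x w * β x u v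

/-- Wedge product of three 1-forms, as a 3-form. -/
def wedge3 (a b c : S → E3 →L[ℝ] ℝ) (x : S) (u v w : E3) : ℝ :=
  a x u * (b x v * c x w - b x w * c x v)
    - a x v * (b x u * c x w - b x w * c x u)
    + a x w * (b x u * c x v - b x v * c x u)

/-- A contact form: a smooth 1-form `α` with `α ∧ dα` nowhere vanishing. -/
def IsContactForm (a : S → E3 →L[ℝ] ℝ) : Prop :=
  IsSmoothOneForm a ∧ ∀ x : S, ∃ u v w : E3, wedge12 a (extd a) x u v w ≠ 0

/-- A taut contact circle: a pair of contact forms all of whose unit circle linear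
combinations are contact forms defining the same volume as `a`. -/
def IsTautContactCircle (a b : S → E3 →L[ℝ] ℝ) : Prop :=
  IsContactForm a ∧ IsContactForm b ∧
    ∀ l1 l2 : ℝ, l1 ^ 2 + l2 ^ 2 = 1 →
      IsContactForm (fun x => l1 • a x + l2 • b x) ∧
        ∀ x u v w, wedge12 (fun x => l1 • a x + l2 • b x)
            (extd (fun x => l1 • a x + l2 • b x)) x u v w
          = wedge12 a (extd a) x u v w

/-- A Cartan structure: a pair of contact forms with `α¹∧dα¹ = α²∧dα²` (nowhere zero) and
`α¹∧dα² = 0 = α²∧dα¹`. -/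
def IsCartanStructure (a b : S → E3 →L[ℝ] ℝ) : Prop :=
  IsContactForm a ∧ IsContactForm b ∧
    (∀ x u v w, wedge12 a (extd a) x u v w = wedge12 b (extd b) x u v w) ∧
    (∀ x u v w, wedge12 a (extd b) x u v w = 0) ∧
    (∀ x u v w, wedge12 b (extd a) x u v w = 0)

/-- A `𝒦`-Cartan structure: a coframing `(α¹, α², α³)` with
`dα¹ = α²∧α³`, `dα² = α³∧α¹`, `dα³ = 𝒦 α¹∧α²`. -/
def IsKCartanStructure (a1 a2 a3 : S → E3 →L[ℝ] ℝ) (K : S → ℝ) : Prop :=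
  IsSmoothOneForm a1 ∧ IsSmoothOneForm a2 ∧ IsSmoothOneForm a3 ∧ IsSmoothFunction K ∧
    (∀ x : S, LinearIndependent ℝ ![a1 x, a2 x, a3 x]) ∧
    (∀ x v w, extd a1 x v w = wedge1 a2 a3 x v w) ∧
    (∀ x v w, extd a2 x v w = wedge1 a3 a1 x v w) ∧
    (∀ x v w, extd a3 x v w = K x * wedge1 a1 a2 x v w)

/-- An `(I,J,K)`-generalized Finsler structure: a coframing `(ω¹, ω², ω³)` together with
smooth functions `I, J, K` satisfying
`dω¹ = −I ω¹∧ω³ + ω²∧ω³`, `dω² = −ω¹∧ω³`, `dω³ = K ω¹∧ω² − J ω¹∧ω³`. -/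
def IsGeneralizedFinslerStructure (ω1 ω2 ω3 : S → E3 →L[ℝ] ℝ) (I J K : S → ℝ) : Prop :=
  IsSmoothOneForm ω1 ∧ IsSmoothOneForm ω2 ∧ IsSmoothOneForm ω3 ∧
    IsSmoothFunction I ∧ IsSmoothFunction J ∧ IsSmoothFunction K ∧
    (∀ x : S, LinearIndependent ℝ ![ω1 x, ω2 x, ω3 x]) ∧
    (∀ x v w, extd ω1 x v w = -(I x) * wedge1 ω1 ω3 x v w + wedge1 ω2 ω3 x v w) ∧
    (∀ x v w, extd ω2 x v w = -wedge1 ω1 ω3 x v w) ∧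
    (∀ x v w, extd ω3 x v w = K x * wedge1 ω1 ω2 x v w - J x * wedge1 ω1 ω3 x v w)



/-! ### Auxiliary lemmas -/

section Aux

variable [IsManifold (𝓡 3) (⊤ : ℕ∞) S]

omit [IsManifold (𝓡 3) (⊤ : ℕ∞) S] in
lemma chartRep_smul (f : S → ℝ) (ω : S → E3 →L[ℝ] ℝ) (x : S) :
    chartRep (fun y => f y • ω y) x
      = fun u => f ((chartAt E3 x).symm u) • chartRep ω x u := by
  funext u
  simp only [chartRep, ContinuousLinearMap.smul_comp]
  ext v; rfl

lemma mfderiv_chartSymm (x : S) :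
    mfderiv (𝓡 3) (𝓡 3) (chartAt E3 x).symm (chartAt E3 x x) =
      ContinuousLinearMap.id ℝ E3 := by
  have hmem : chartAt E3 x x ∈ (chartAt E3 x).target :=
    (chartAt E3 x).map_source (mem_chart_source E3 x)
  have hmd : MDifferentiableAt (𝓡 3) (𝓡 3) (chartAt E3 x).symm (chartAt E3 x x) :=
    mdifferentiableAt_atlas_symm (I := 𝓡 3) (chart_mem_atlas E3 x) hmem
  refine HasMFDerivAt.mfderiv ⟨hmd.continuousAt, ?_⟩
  have hrange : Set.range (𝓡 3) = Set.univ := by simp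
  rw [hrange]; refine HasFDerivAt.hasFDerivWithinAt ?_
  have heq : writtenInExtChartAt (𝓡 3) (𝓡 3) (chartAt E3 x x) (chartAt E3 x).symm
      =ᶠ[nhds (chartAt E3 x x)] id := by
    have hxx : (chartAt E3 x).symm (chartAt E3 x x) = x :=
      (chartAt E3 x).left_inv (mem_chart_source E3 x)
    filter_upwards [(chartAt E3 x).open_target.mem_nhds hmem] with u hu
    simp only [writtenInExtChartAt, hxx, chartAt_self_eq, OpenPartialHomeomorph.refl_apply,
      OpenPartialHomeomorph.refl_symm, Function.comp_apply, extChartAt, OpenPartialHomeomorph.extend,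
      modelWithCornersSelf_partialEquiv, PartialEquiv.trans_apply,
      PartialEquiv.trans_symm_eq_symm_trans_symm,
      PartialEquiv.symm_symm, PartialEquiv.refl_symm, PartialEquiv.refl_coe,
      OpenPartialHomeomorph.coe_coe, OpenPartialHomeomorph.coe_coe_symm, id_eq,
      ModelWithCorners.toPartialEquiv_coe, ModelWithCorners.toPartialEquiv_coe_symm,
      modelWithCornersSelf_coe, modelWithCornersSelf_coe_symm]
    exact (chartAt E3 x).right_inv hu
  exact (hasFDerivAt_id _).congr_of_eventuallyEq heq

lemma chartRep_self (ω : S → E3 →L[ℝ] ℝ) (x : S) :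
    chartRep ω x (chartAt E3 x x) = ω x := by
  have hxx : (chartAt E3 x).symm (chartAt E3 x x) = x :=
    (chartAt E3 x).left_inv (mem_chart_source E3 x)
  rw [chartRep, mfderiv_chartSymm, hxx, ContinuousLinearMap.comp_id]

lemma fderiv_comp_chartSymm (f : S → ℝ) (hf : IsSmoothFunction f) (x : S) :
    fderiv ℝ (fun u => f ((chartAt E3 x).symm u)) (chartAt E3 x x) = dFun f x := by
  have hxx : (chartAt E3 x).symm (chartAt E3 x x) = x :=
    (chartAt E3 x).left_inv (mem_chart_source E3 x)
  have hmem : chartAt E3 x x ∈ (chartAt E3 x).target :=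
    (chartAt E3 x).map_source (mem_chart_source E3 x)
  have h1 : MDifferentiableAt (𝓡 3) (𝓡 3) (chartAt E3 x).symm (chartAt E3 x x) :=
    mdifferentiableAt_atlas_symm (I := 𝓡 3) (chart_mem_atlas E3 x) hmem
  have h2 : MDifferentiableAt (𝓡 3) 𝓘(ℝ, ℝ) f ((chartAt E3 x).symm (chartAt E3 x x)) :=
    hf.mdifferentiableAt (by simp)
  have hcomp := mfderiv_comp (I' := 𝓡 3) (chartAt E3 x x) h2 h1
  rw [← mfderiv_eq_fderiv]
  rw [Function.comp_def] at hcomp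
  rw [hcomp, mfderiv_chartSymm]
  have h3 : (fun y => (mfderiv (𝓡 3) 𝓘(ℝ, ℝ) f y : E3 →L[ℝ] ℝ)) ((chartAt E3 x).symm (chartAt E3 x x))
      = dFun f x := by rw [hxx]; rfl
  exact ContinuousLinearMap.ext fun v => congrFun (congrArg DFunLike.coe h3) v

lemma contDiffOn_comp_chartSymm (f : S → ℝ) (hf : IsSmoothFunction f) (x : S) :
    ContDiffOn ℝ ((⊤ : ℕ∞) : WithTop ℕ∞) (fun u => f ((chartAt E3 x).symm u))
      (chartAt E3 x).target := by
  have h : ContMDiffOn (𝓡 3) 𝓘(ℝ, ℝ) ((⊤ : ℕ∞) : WithTop ℕ∞) (f ∘ (chartAt E3 x).symm) (chartAt E3 x).target :=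
    hf.comp_contMDiffOn contMDiffOn_chart_symm
  exact contMDiffOn_iff_contDiffOn.mp h

/-- Leibniz rule: `d(f ω) = df ∧ ω + f dω`, at a point. -/
lemma extd_smul (f : S → ℝ) (hf : IsSmoothFunction f)
    (ω : S → E3 →L[ℝ] ℝ) (hω : IsSmoothOneForm ω) (x : S) (v w : E3) :
    extd (fun y => f y • ω y) x v w
      = dFun f x v * ω x w - dFun f x w * ω x v + f x * extd ω x v w := by
  have hmem : chartAt E3 x x ∈ (chartAt E3 x).target :=
    (chartAt E3 x).map_source (mem_chart_source E3 x)
  have hxx : (chartAt E3 x).symm (chartAt E3 x x) = x :=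
    (chartAt E3 x).left_inv (mem_chart_source E3 x)
  have hg : DifferentiableAt ℝ (fun u => f ((chartAt E3 x).symm u)) (chartAt E3 x x) :=
    ((contDiffOn_comp_chartSymm f hf x).differentiableOn (by simp)).differentiableAt
      ((chartAt E3 x).open_target.mem_nhds hmem)
  have hh : DifferentiableAt ℝ (chartRep ω x) (chartAt E3 x x) :=
    ((hω x).differentiableOn (by simp)).differentiableAt
      ((chartAt E3 x).open_target.mem_nhds hmem)
  have key : ∀ a : E3,
      fderiv ℝ (fun u => chartRep (fun y => f y • ω y) x u a) (chartAt E3 x x)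
        = (ω x a) • (dFun f x)
          + (f x) • fderiv ℝ (fun u => chartRep ω x u a) (chartAt E3 x x) := by
    intro a
    have hha : DifferentiableAt ℝ (fun u => chartRep ω x u a) (chartAt E3 x x) :=
      hh.clm_apply (differentiableAt_const a)
    have hrw : (fun u => chartRep (fun y => f y • ω y) x u a)
        = fun u => f ((chartAt E3 x).symm u) * chartRep ω x u a := by
      rw [chartRep_smul]; rfl
    rw [hrw, fderiv_fun_mul hg hha, fderiv_comp_chartSymm f hf, chartRep_self, hxx]
    rw [add_comm]
  simp only [extd, key, ContinuousLinearMap.add_apply, ContinuousLinearMap.smul_apply,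
    smul_eq_mul]
  ring

omit [IsManifold (𝓡 3) (⊤ : ℕ∞) S] in
/-- Dual basis triple for a linearly independent triple of functionals on `E3`. -/
lemma exists_dual_triple (f1 f2 f3 : E3 →L[ℝ] ℝ)
    (h : LinearIndependent ℝ ![f1, f2, f3]) :
    ∃ u v w : E3, f1 u = 1 ∧ f2 u = 0 ∧ f3 u = 0 ∧ f1 v = 0 ∧ f2 v = 1 ∧ f3 v = 0 ∧
      f1 w = 0 ∧ f2 w = 0 ∧ f3 w = 1 := by
  classical
  set g : Fin 3 → (E3 →ₗ[ℝ] ℝ) := ![(f1 : E3 →ₗ[ℝ] ℝ), (f2 : E3 →ₗ[ℝ] ℝ), (f3 : E3 →ₗ[ℝ] ℝ)]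
    with hg
  have hgf : ∀ i, g i = ((![f1, f2, f3] i : E3 →L[ℝ] ℝ) : E3 →ₗ[ℝ] ℝ) := by
    intro i; fin_cases i <;> rfl
  have hli : LinearIndependent ℝ g := by
    have hthis := h.map'
      (ContinuousLinearMap.coeLM ℝ : (E3 →L[ℝ] ℝ) →ₗ[ℝ] (E3 →ₗ[ℝ] ℝ))
      (LinearMap.ker_eq_bot.mpr (fun a b hab => ContinuousLinearMap.coe_injective hab))
    convert hthis using 1
    funext i
    rw [hgf i]
    simp [ContinuousLinearMap.coeLM]
    all_goals rfl
  have hcard : Fintype.card (Fin 3) = Module.finrank ℝ (E3 →ₗ[ℝ] ℝ) := by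
    have h1 : Module.finrank ℝ (E3 →ₗ[ℝ] ℝ) = Module.finrank ℝ E3 :=
      Subspace.dual_finrank_eq (K := ℝ) (V := E3)
    rw [h1, finrank_euclideanSpace_fin]
    simp
  have hspan : Submodule.span ℝ (Set.range g) = ⊤ :=
    hli.span_eq_top_of_card_eq_finrank hcard
  set Φ : E3 →ₗ[ℝ] (Fin 3 → ℝ) := LinearMap.pi (fun i => g i) with hΦ
  have hinj : Function.Injective Φ := by
    rw [← LinearMap.ker_eq_bot]
    apply (Submodule.eq_bot_iff _).mpr
    intro z hz
    have hz' : ∀ i, g i z = 0 := fun i => congrFun (LinearMap.mem_ker.mp hz) i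
    rw [← Module.forall_dual_apply_eq_zero_iff (R := ℝ)]
    intro φ
    have hφ : φ ∈ Submodule.span ℝ (Set.range g) := hspan ▸ Submodule.mem_top
    obtain ⟨c, hc⟩ := (Submodule.mem_span_range_iff_exists_fun ℝ).mp hφ
    rw [← hc]
    simp [hz']
  have hsurj : Function.Surjective Φ := by
    have hrk : Module.finrank ℝ E3 = Module.finrank ℝ (Fin 3 → ℝ) := by
      rw [finrank_euclideanSpace_fin]; simp
    exact (LinearMap.injective_iff_surjective_of_finrank_eq_finrank hrk).mp hinj
  obtain ⟨u, hu⟩ := hsurj (Pi.single 0 1)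
  obtain ⟨v, hv⟩ := hsurj (Pi.single 1 1)
  obtain ⟨w, hw⟩ := hsurj (Pi.single 2 1)
  refine ⟨u, v, w, ?_, ?_, ?_, ?_, ?_, ?_, ?_, ?_, ?_⟩
  · have := congrFun hu 0; simpa [hΦ, hg] using this
  · have := congrFun hu 1; simpa [hΦ, hg] using this
  · have := congrFun hu 2; simpa [hΦ, hg] using this
  · have := congrFun hv 0; simpa [hΦ, hg] using this
  · have := congrFun hv 1; simpa [hΦ, hg] using this
  · have := congrFun hv 2; simpa [hΦ, hg] using this
  · have := congrFun hw 0; simpa [hΦ, hg] using this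
  · have := congrFun hw 1; simpa [hΦ, hg] using this
  · have := congrFun hw 2; simpa [hΦ, hg] using this

/-- The "curl" of a one-form in a chart: the chart representation of its exterior
derivative. -/
def curl3 (σ : E3 → E3 →L[ℝ] ℝ) (u : E3) (v w : E3) : ℝ :=
  fderiv ℝ (fun q => σ q w) u v - fderiv ℝ (fun q => σ q v) u w

omit [IsManifold (𝓡 3) (⊤ : ℕ∞) S] in
lemma curl3_pullback (σ : E3 → E3 →L[ℝ] ℝ) (τ : E3 → E3) (p0 : E3)
    (hσ : DifferentiableAt ℝ σ (τ p0)) (hτ : ContDiffAt ℝ 2 τ p0) (v w : E3) :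
    curl3 (fun p => (σ (τ p)).comp (fderiv ℝ τ p)) p0 v w
      = curl3 σ (τ p0) (fderiv ℝ τ p0 v) (fderiv ℝ τ p0 w) := by
  have hτ1 : DifferentiableAt ℝ τ p0 := hτ.differentiableAt (by norm_num)
  have hστ : DifferentiableAt ℝ (fun p => σ (τ p)) p0 := hσ.comp p0 hτ1
  have hDτ : DifferentiableAt ℝ (fun p => fderiv ℝ τ p) p0 :=
    (hτ.fderiv_right (m := 1) (by norm_num)).differentiableAt (by norm_num)
  have hsymm : IsSymmSndFDerivAt ℝ τ p0 := hτ.isSymmSndFDerivAt (by norm_num)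
  have hDA : ∀ a c : E3, fderiv ℝ (fun p => fderiv ℝ τ p a) p0 c
      = fderiv ℝ (fderiv ℝ τ) p0 c a := by
    intro a c
    rw [fderiv_clm_apply hDτ (differentiableAt_const a)]
    simp
  have hchain : fderiv ℝ (fun p => σ (τ p)) p0 = (fderiv ℝ σ (τ p0)).comp (fderiv ℝ τ p0) :=
    fderiv_comp p0 hσ hτ1
  have hmain : ∀ a c : E3,
      fderiv ℝ (fun p => σ (τ p) (fderiv ℝ τ p a)) p0 c
        = σ (τ p0) (fderiv ℝ (fderiv ℝ τ) p0 c a)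
          + fderiv ℝ σ (τ p0) (fderiv ℝ τ p0 c) (fderiv ℝ τ p0 a) := by
    intro a c
    have hu : DifferentiableAt ℝ (fun p => fderiv ℝ τ p a) p0 :=
      hDτ.clm_apply (differentiableAt_const a)
    rw [fderiv_clm_apply hστ hu]
    simp only [ContinuousLinearMap.add_apply, ContinuousLinearMap.coe_comp',
      Function.comp_apply, ContinuousLinearMap.flip_apply]
    rw [hDA a c, hchain]
    simp
  have hRHS : ∀ a c : E3, fderiv ℝ (fun q => σ q a) (τ p0) c = fderiv ℝ σ (τ p0) c a := by
    intro a c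
    rw [fderiv_clm_apply hσ (differentiableAt_const a)]
    simp
  simp only [curl3, ContinuousLinearMap.coe_comp', Function.comp_apply]
  rw [hmain w v, hmain v w, hRHS (fderiv ℝ τ p0 w) (fderiv ℝ τ p0 v),
    hRHS (fderiv ℝ τ p0 v) (fderiv ℝ τ p0 w), hsymm v w]
  ring

/-- The structure equation `dω³ = K ω¹∧ω²` read in an arbitrary chart, at an arbitrary
point of its target. -/
lemma curl3_chartRep (ω1 ω2 ω3 : S → E3 →L[ℝ] ℝ) (K : S → ℝ)
    (hs3 : IsSmoothOneForm ω3)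
    (hd3 : ∀ y v w, extd ω3 y v w = K y * wedge1 ω1 ω2 y v w)
    (x : S) (u : E3) (hu : u ∈ (chartAt E3 x).target) (a b : E3) :
    curl3 (chartRep ω3 x) u a b
      = K ((chartAt E3 x).symm u) *
        (chartRep ω1 x u a * chartRep ω2 x u b - chartRep ω1 x u b * chartRep ω2 x u a) := by
  set y : S := (chartAt E3 x).symm u with hy
  have hysrc : y ∈ (chartAt E3 x).source := (chartAt E3 x).map_target hu
  set e : OpenPartialHomeomorph E3 E3 := (chartAt E3 y).symm.trans (chartAt E3 x) with he_def
  set τ : E3 → E3 := ⇑e with hτ_def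
  set yh : E3 := chartAt E3 y y with hyh
  have hyhe : yh ∈ e.source := by
    rw [he_def, OpenPartialHomeomorph.trans_source]
    constructor
    · exact (chartAt E3 y).map_source (mem_chart_source E3 y)
    · have h : (chartAt E3 y).symm yh ∈ (chartAt E3 x).source := by
        rw [hyh, (chartAt E3 y).left_inv (mem_chart_source E3 y)]
        exact hysrc
      exact h
  have hτyh : τ yh = u := by
    show (chartAt E3 x) ((chartAt E3 y).symm yh) = u
    rw [hyh, (chartAt E3 y).left_inv (mem_chart_source E3 y), hy,
      (chartAt E3 x).right_inv hu]
  have he : e.MDifferentiable (𝓡 3) (𝓡 3) :=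
    (mdifferentiable_chart (I := 𝓡 3) y).symm.trans (mdifferentiable_chart (I := 𝓡 3) x)
  have hτsm : ContDiffOn ℝ 2 τ e.source := by
    have h1 : ContMDiffOn (𝓡 3) (𝓡 3) ((⊤ : ℕ∞) : WithTop ℕ∞) ((chartAt E3 x) ∘ (chartAt E3 y).symm) e.source := by
      apply (contMDiffOn_chart (x := x)).comp
        (contMDiffOn_chart_symm.mono ?_) ?_
      · rw [he_def, OpenPartialHomeomorph.trans_source]; exact Set.inter_subset_left
      · intro p hp
        rw [he_def, OpenPartialHomeomorph.trans_source] at hp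
        exact hp.2
    have h2 : ContDiffOn ℝ (⊤ : ℕ∞) τ e.source := by
      have := contMDiffOn_iff_contDiffOn.mp h1
      exact_mod_cast this
    exact h2.of_le (WithTop.coe_le_coe.mpr le_top)
  have hτ2 : ContDiffAt ℝ 2 τ yh :=
    hτsm.contDiffAt (e.open_source.mem_nhds hyhe)
  have hpull : ∀ (ω : S → E3 →L[ℝ] ℝ), ∀ p ∈ e.source,
      chartRep ω y p = (chartRep ω x (τ p)).comp (fderiv ℝ τ p) := by
    intro ω p hp
    rw [he_def, OpenPartialHomeomorph.trans_source] at hp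
    obtain ⟨hp1, hp2⟩ := hp
    have hp1' : p ∈ (chartAt E3 y).target := hp1
    have hp2' : (chartAt E3 y).symm p ∈ (chartAt E3 x).source := hp2
    have hτp : τ p = (chartAt E3 x) ((chartAt E3 y).symm p) := rfl
    have hback : (chartAt E3 x).symm (τ p) = (chartAt E3 y).symm p := by
      rw [hτp, (chartAt E3 x).left_inv hp2']
    have h1 : MDifferentiableAt (𝓡 3) (𝓡 3) (chartAt E3 x).symm (τ p) :=
      mdifferentiableAt_atlas_symm (I := 𝓡 3) (chart_mem_atlas E3 x)
        ((chartAt E3 x).map_source hp2')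
    have h2 : MDifferentiableAt (𝓡 3) (𝓡 3) τ p :=
      mdifferentiableAt_iff_differentiableAt.mpr
        ((hτsm.differentiableOn (by norm_num)).differentiableAt
          (e.open_source.mem_nhds (by
            rw [he_def, OpenPartialHomeomorph.trans_source]
            exact ⟨hp1, hp2⟩)))
    have hcomp := mfderiv_comp (I' := 𝓡 3) p h1 h2
    have heq : (chartAt E3 x).symm ∘ τ =ᶠ[nhds p] (chartAt E3 y).symm := by
      have hps : e.source ∈ nhds p := by
        apply e.open_source.mem_nhds
        rw [he_def, OpenPartialHomeomorph.trans_source]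
        exact ⟨hp1, hp2⟩
      filter_upwards [hps] with q hq
      rw [he_def, OpenPartialHomeomorph.trans_source] at hq
      exact (chartAt E3 x).left_inv hq.2
    have hmf : mfderiv (𝓡 3) (𝓡 3) (chartAt E3 y).symm p
        = (mfderiv (𝓡 3) (𝓡 3) (chartAt E3 x).symm (τ p)).comp
            (mfderiv (𝓡 3) (𝓡 3) τ p) := by
      rw [← hcomp]
      exact (heq.mfderiv_eq).symm
    have hmfτ : mfderiv (𝓡 3) (𝓡 3) τ p = fderiv ℝ τ p := mfderiv_eq_fderiv
    have hmfd : ∀ c : E3, mfderiv (𝓡 3) (𝓡 3) (chartAt E3 y).symm p c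
        = mfderiv (𝓡 3) (𝓡 3) (chartAt E3 x).symm (τ p) (fderiv ℝ τ p c) := by
      intro c
      have h1' := DFunLike.congr_fun hmf c
      have h2' := DFunLike.congr_fun hmfτ c
      refine h1'.trans ?_
      exact congrArg _ h2'
    ext c
    show ω ((chartAt E3 y).symm p) (mfderiv (𝓡 3) (𝓡 3) (chartAt E3 y).symm p c)
        = ω ((chartAt E3 x).symm (τ p))
            (mfderiv (𝓡 3) (𝓡 3) (chartAt E3 x).symm (τ p) (fderiv ℝ τ p c))
    rw [hmfd c, hback]
  have hσdiff : DifferentiableAt ℝ (chartRep ω3 x) (τ yh) := by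
    rw [hτyh]
    exact ((hs3 x).differentiableOn (by norm_num)).differentiableAt
      ((chartAt E3 x).open_target.mem_nhds hu)
  have hkey : ∀ v w : E3,
      curl3 (chartRep ω3 x) u (fderiv ℝ τ yh v) (fderiv ℝ τ yh w)
        = extd ω3 y v w := by
    intro v w
    have h1 := curl3_pullback (chartRep ω3 x) τ yh hσdiff hτ2 v w
    rw [hτyh] at h1
    rw [← h1]
    show _ = curl3 (chartRep ω3 y) yh v w
    unfold curl3
    have hev : ∀ c : E3, (fun p => (chartRep ω3 x (τ p)).comp (fderiv ℝ τ p) c)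
        =ᶠ[nhds yh] (fun p => chartRep ω3 y p c) := by
      intro c
      filter_upwards [e.open_source.mem_nhds hyhe] with q hq
      rw [hpull ω3 q hq]
    rw [(hev w).fderiv_eq, (hev v).fderiv_eq]
  have hsurj : Function.Surjective (fderiv ℝ τ yh) := by
    have := he.mfderiv_surjective hyhe
    rwa [show mfderiv (𝓡 3) (𝓡 3) (⇑e) yh = fderiv ℝ τ yh from mfderiv_eq_fderiv] at this
  obtain ⟨v, hv⟩ := hsurj a
  obtain ⟨w, hw⟩ := hsurj b
  have hval : ∀ (ω : S → E3 →L[ℝ] ℝ) (c : E3),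
      ω y c = chartRep ω x u (fderiv ℝ τ yh c) := by
    intro ω c
    have hc := hpull ω yh hyhe
    rw [chartRep_self] at hc
    rw [hc, hτyh]
    rfl
  rw [← hv, ← hw, hkey v w, hd3]
  unfold wedge1
  rw [hval ω1 v, hval ω1 w, hval ω2 v, hval ω2 w]

/-- If `dω³ = K ω¹∧ω²` and `m² K = 1` with `m` nowhere vanishing, then `m ω³` is a
(chart-analytic) smooth one-form. -/
lemma isSmoothOneForm_smul_main (ω1 ω2 ω3 : S → E3 →L[ℝ] ℝ) (K : S → ℝ)
    (hs1 : IsSmoothOneForm ω1) (hs2 : IsSmoothOneForm ω2) (hs3 : IsSmoothOneForm ω3)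
    (hLI : ∀ y : S, LinearIndependent ℝ ![ω1 y, ω2 y, ω3 y])
    (hd3 : ∀ y v w, extd ω3 y v w = K y * wedge1 ω1 ω2 y v w)
    (m : S → ℝ) (hm : IsSmoothFunction m) (hmne : ∀ y, m y ≠ 0)
    (hmK : ∀ y, m y ^ 2 * K y = 1) :
    IsSmoothOneForm (fun y => m y • ω3 y) := by
  have hKne : ∀ y, K y ≠ 0 := by
    intro y hy
    have h := hmK y
    rw [hy, mul_zero] at h
    exact one_ne_zero h.symm
  have hKinv : ∀ y, (K y)⁻¹ = m y ^ 2 := by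
    intro y
    exact inv_eq_of_mul_eq_one_right (by rw [mul_comm]; exact hmK y)
  intro x
  rw [chartRep_smul]
  have hmsymm : ContDiffOn ℝ (⊤ : ℕ∞) (fun u => m ((chartAt E3 x).symm u)) (chartAt E3 x).target := by
    intro u0 hu0
    set y0 : S := (chartAt E3 x).symm u0 with hy0
    have hLsurj : Function.Surjective
        (mfderiv (𝓡 3) (𝓡 3) (chartAt E3 x).symm u0) :=
      (mdifferentiable_chart (I := 𝓡 3) x).symm.mfderiv_surjective (by exact hu0)
    obtain ⟨u', v', w', h11, h21, h31, h12, h22, h32, h13, h23, h33⟩ :=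
      exists_dual_triple (ω1 y0) (ω2 y0) (ω3 y0) (hLI y0)
    obtain ⟨a, ha⟩ := hLsurj u'
    obtain ⟨b, hb⟩ := hLsurj v'
    have hra1 : chartRep ω1 x u0 a = 1 := by
      show ω1 y0 (mfderiv (𝓡 3) (𝓡 3) (chartAt E3 x).symm u0 a) = 1
      rw [ha]; exact h11
    have hra2 : chartRep ω2 x u0 a = 0 := by
      show ω2 y0 (mfderiv (𝓡 3) (𝓡 3) (chartAt E3 x).symm u0 a) = 0
      rw [ha]; exact h21
    have hrb1 : chartRep ω1 x u0 b = 0 := by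
      show ω1 y0 (mfderiv (𝓡 3) (𝓡 3) (chartAt E3 x).symm u0 b) = 0
      rw [hb]; exact h12
    have hrb2 : chartRep ω2 x u0 b = 1 := by
      show ω2 y0 (mfderiv (𝓡 3) (𝓡 3) (chartAt E3 x).symm u0 b) = 1
      rw [hb]; exact h22
    set F : E3 → ℝ := fun u => curl3 (chartRep ω3 x) u a b with hF
    set G : E3 → ℝ := fun u =>
      chartRep ω1 x u a * chartRep ω2 x u b - chartRep ω1 x u b * chartRep ω2 x u a with hG
    have hFG : ∀ u ∈ (chartAt E3 x).target, F u = K ((chartAt E3 x).symm u) * G u :=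
      fun u hu => curl3_chartRep ω1 ω2 ω3 K hs3 hd3 x u hu a b
    have hGu0 : G u0 = 1 := by rw [hG]; simp only [hra1, hra2, hrb1, hrb2]; ring
    have hGcd : ContDiffOn ℝ (⊤ : ℕ∞) G (chartAt E3 x).target := by
      apply ContDiffOn.sub
      · exact ((hs1 x).clm_apply contDiffOn_const).mul ((hs2 x).clm_apply contDiffOn_const)
      · exact ((hs1 x).clm_apply contDiffOn_const).mul ((hs2 x).clm_apply contDiffOn_const)
    have hGat : ContDiffAt ℝ (⊤ : ℕ∞) G u0 :=
      hGcd.contDiffAt ((chartAt E3 x).open_target.mem_nhds hu0)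
    have hFcd : ContDiffOn ℝ (⊤ : ℕ∞) F (chartAt E3 x).target := by
      have hd : ∀ c : E3, ContDiffOn ℝ (⊤ : ℕ∞)
          (fun u => fderiv ℝ (fun q => chartRep ω3 x q c) u) (chartAt E3 x).target := by
        intro c
        apply ContDiffOn.fderiv_of_isOpen ((hs3 x).clm_apply contDiffOn_const)
          (chartAt E3 x).open_target
        simp
      apply ContDiffOn.sub
      · exact (hd b).clm_apply contDiffOn_const
      · exact (hd a).clm_apply contDiffOn_const
    have hFat : ContDiffAt ℝ (⊤ : ℕ∞) F u0 :=
      hFcd.contDiffAt ((chartAt E3 x).open_target.mem_nhds hu0)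
    have hKat : ContDiffAt ℝ (⊤ : ℕ∞) (fun u => K ((chartAt E3 x).symm u)) u0 := by
      apply ContDiffAt.congr_of_eventuallyEq (hFat.div hGat (by rw [hGu0]; exact one_ne_zero))
      have hGne : ∀ᶠ u in nhds u0, G u ≠ 0 :=
        hGat.continuousAt.eventually_ne (by rw [hGu0]; exact one_ne_zero)
      filter_upwards [(chartAt E3 x).open_target.mem_nhds hu0, hGne] with u hu hGu
      rw [Pi.div_apply, hFG u hu]
      field_simp
    have hconc : ContinuousAt (fun u => m ((chartAt E3 x).symm u)) u0 := by
      apply ContinuousAt.comp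
      · exact hm.continuous.continuousAt
      · exact ((chartAt E3 x).continuousOn_symm).continuousAt
          ((chartAt E3 x).open_target.mem_nhds hu0)
    set s : ℝ := if 0 < m y0 then 1 else -1 with hs
    have hqat : ContDiffAt ℝ (⊤ : ℕ∞) (fun u => (K ((chartAt E3 x).symm u))⁻¹) u0 :=
      hKat.inv (hKne y0)
    have hhat : ContDiffAt ℝ (⊤ : ℕ∞)
        (fun u => s * Real.exp (Real.log ((K ((chartAt E3 x).symm u))⁻¹) / 2)) u0 := by
      apply ContDiffAt.mul contDiffAt_const
      apply ContDiffAt.comp (g := Real.exp) u0 Real.contDiff_exp.contDiffAt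
      apply ContDiffAt.div_const
      exact ContDiffAt.comp (g := Real.log) u0
        (Real.contDiffAt_log.mpr (by rw [hKinv y0]; exact pow_ne_zero 2 (hmne y0))) hqat
    have hev : (fun u => m ((chartAt E3 x).symm u))
        =ᶠ[nhds u0] (fun u => s * Real.exp (Real.log ((K ((chartAt E3 x).symm u))⁻¹) / 2)) := by
      have hpos : (0 : ℝ) < m y0 * m y0 := by
        rcases (hmne y0).lt_or_gt with h | h
        · exact mul_pos_of_neg_of_neg h h
        · exact mul_pos h h
      have hsgn : ∀ᶠ u in nhds u0, 0 < m ((chartAt E3 x).symm u) * m y0 :=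
        (hconc.mul continuousAt_const).eventually (eventually_gt_nhds hpos)
      filter_upwards [hsgn] with u hu
      set t : ℝ := m ((chartAt E3 x).symm u) with ht
      have htne : t ≠ 0 := hmne _
      rw [hKinv ((chartAt E3 x).symm u)]
      have hE : Real.exp (Real.log (t ^ 2) / 2) = |t| := by
        rw [Real.log_pow]
        have h2 : ((2 : ℕ) : ℝ) * Real.log t / 2 = Real.log t := by ring
        rw [h2, ← Real.log_abs, Real.exp_log (abs_pos.mpr htne)]
      rw [← ht, hE]
      rcases (hmne y0).lt_or_gt with hy | hy
      · have hslt : s = -1 := by rw [hs, if_neg (not_lt.mpr hy.le)]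
        have htlt : t < 0 := by nlinarith
        rw [hslt, abs_of_neg htlt]; ring
      · have hslt : s = 1 := by rw [hs, if_pos hy]
        have htlt : 0 < t := by nlinarith
        rw [hslt, abs_of_pos htlt]; ring
    exact (hhat.congr_of_eventuallyEq hev).contDiffWithinAt
  exact hmsymm.smul (hs3 x)

end Aux

/-- Let `(ω¹, ω², ω³; I, 0, K)` be an `(I,0,K)`-generalized Finsler structure
on a smooth 3-manifold `Σ` and let `m` be a smooth function on `Σ`. Then `(α¹, α²) := (ω², m·ω³)`
is a Cartan structure on `Σ` iff `m` is nowhere vanishing, `m₁ = 0`, and `m² = 1/K`. -/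
theorem landsberg_cartan_pair_iff {S : Type*} [TopologicalSpace S] [ChartedSpace E3 S]
    [IsManifold (𝓡 3) (⊤ : ℕ∞) S]
    (ω1 ω2 ω3 : S → E3 →L[ℝ] ℝ) (I K : S → ℝ)
    (hGFS : IsGeneralizedFinslerStructure ω1 ω2 ω3 I (fun _ => 0) K)
    (m : S → ℝ) (hm : IsSmoothFunction m)
    (m1 m2 m3 : S → ℝ)
    (hdm : ∀ x v, dFun m x v = m1 x * ω1 x v + m2 x * ω2 x v + m3 x * ω3 x v) :
    IsCartanStructure ω2 (fun x => m x • ω3 x) ↔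
      ((∀ x, m x ≠ 0) ∧ (∀ x, m1 x = 0) ∧ (∀ x, (m x) ^ 2 = 1 / K x)) := by
  obtain ⟨hs1, hs2, hs3, hsI, hsJ, hsK, hLI, hd1, hd2, hd3⟩ := hGFS
  have hd3' : ∀ y v w, extd ω3 y v w = K y * wedge1 ω1 ω2 y v w := by
    intro y v w
    rw [hd3]
    ring
  have hdα2 : ∀ z v w, extd (fun y => m y • ω3 y) z v w =
      m1 z * (ω1 z v * ω3 z w - ω1 z w * ω3 z v)
      + m2 z * (ω2 z v * ω3 z w - ω2 z w * ω3 z v)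
      + m z * (K z * (ω1 z v * ω2 z w - ω1 z w * ω2 z v)) := by
    intro z v w
    rw [extd_smul m hm ω3 hs3, hd3', hdm z v, hdm z w]
    simp only [wedge1]
    ring
  constructor
  · rintro ⟨hc1, hc2, heq, h12, h21⟩
    have key : ∀ z : S, m z ^ 2 * K z = 1 ∧ m1 z = 0 := by
      intro z
      obtain ⟨u, v, w, h11, h21', h31, h12', h22, h32, h13, h23, h33⟩ :=
        exists_dual_triple (ω1 z) (ω2 z) (ω3 z) (hLI z)
      have hL : wedge12 ω2 (extd ω2) z u v w = 1 := by
        simp only [wedge12, hd2, wedge1, h11, h21', h31, h12', h22, h32, h13, h23, h33]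
        norm_num
      have hR : wedge12 (fun y => m y • ω3 y) (extd (fun y => m y • ω3 y)) z u v w
          = m z ^ 2 * K z := by
        simp only [wedge12, hdα2, ContinuousLinearMap.smul_apply, smul_eq_mul,
          h11, h21', h31, h12', h22, h32, h13, h23, h33]
        ring
      have e1 : (1 : ℝ) = m z ^ 2 * K z := by
        rw [← hL, ← hR]
        exact heq z u v w
      have hLL : wedge12 ω2 (extd (fun y => m y • ω3 y)) z u v w = -(m1 z) := by
        simp only [wedge12, hdα2, h11, h21', h31, h12', h22, h32, h13, h23, h33]
        ring
      have e2 : m1 z = 0 := by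
        have h0 := h12 z u v w
        rw [hLL] at h0
        linarith
      exact ⟨e1.symm, e2⟩
    refine ⟨fun z => ?_, fun z => (key z).2, fun z => ?_⟩
    · intro h0
      have h1 := (key z).1
      rw [h0] at h1
      norm_num at h1
    · have h1 := (key z).1
      have hK : K z ≠ 0 := by
        intro h0
        rw [h0, mul_zero] at h1
        norm_num at h1
      field_simp
      linarith
  · rintro ⟨hmne, hm1, hm2K⟩
    have hKne : ∀ z, K z ≠ 0 := by
      intro z h0
      have h1 := hm2K z
      rw [h0] at h1
      simp at h1
      exact hmne z h1
    have hmK1 : ∀ z, m z ^ 2 * K z = 1 := by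
      intro z
      rw [hm2K z]
      field_simp [hKne z]
    have htriple : ∀ z : S, ∃ u v w : E3,
        ω1 z u = 1 ∧ ω2 z u = 0 ∧ ω3 z u = 0 ∧ ω1 z v = 0 ∧ ω2 z v = 1 ∧ ω3 z v = 0 ∧
          ω1 z w = 0 ∧ ω2 z w = 0 ∧ ω3 z w = 1 :=
      fun z => exists_dual_triple (ω1 z) (ω2 z) (ω3 z) (hLI z)
    have hsα2 : IsSmoothOneForm (fun y => m y • ω3 y) :=
      isSmoothOneForm_smul_main ω1 ω2 ω3 K hs1 hs2 hs3 hLI hd3' m hm hmne hmK1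
    refine ⟨⟨hs2, ?_⟩, ⟨hsα2, ?_⟩, ?_, ?_, ?_⟩
    · intro z
      obtain ⟨u, v, w, h11, h21', h31, h12', h22, h32, h13, h23, h33⟩ := htriple z
      refine ⟨u, v, w, ?_⟩
      have hL : wedge12 ω2 (extd ω2) z u v w = 1 := by
        simp only [wedge12, hd2, wedge1, h11, h21', h31, h12', h22, h32, h13, h23, h33]
        norm_num
      rw [hL]
      exact one_ne_zero
    · intro z
      obtain ⟨u, v, w, h11, h21', h31, h12', h22, h32, h13, h23, h33⟩ := htriple z
      refine ⟨u, v, w, ?_⟩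
      have hR : wedge12 (fun y => m y • ω3 y) (extd (fun y => m y • ω3 y)) z u v w
          = m z ^ 2 * K z := by
        simp only [wedge12, hdα2, ContinuousLinearMap.smul_apply, smul_eq_mul,
          h11, h21', h31, h12', h22, h32, h13, h23, h33]
        ring
      rw [hR, hmK1 z]
      exact one_ne_zero
    · intro z u v w
      have hL : wedge12 ω2 (extd ω2) z u v w
          = ω3 z u * (ω1 z v * ω2 z w - ω1 z w * ω2 z v)
            - ω3 z v * (ω1 z u * ω2 z w - ω1 z w * ω2 z u)
            + ω3 z w * (ω1 z u * ω2 z v - ω1 z v * ω2 z u) := by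
        simp only [wedge12, hd2, wedge1]
        ring
      have hR : wedge12 (fun y => m y • ω3 y) (extd (fun y => m y • ω3 y)) z u v w
          = m z ^ 2 * K z *
            (ω3 z u * (ω1 z v * ω2 z w - ω1 z w * ω2 z v)
              - ω3 z v * (ω1 z u * ω2 z w - ω1 z w * ω2 z u)
              + ω3 z w * (ω1 z u * ω2 z v - ω1 z v * ω2 z u)) := by
        simp only [wedge12, hdα2, ContinuousLinearMap.smul_apply, smul_eq_mul, hm1]
        ring
      rw [hL, hR, hmK1 z, one_mul]
    · intro z u v w
      simp only [wedge12, hdα2, hm1]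
      ring
    · intro z u v w
      simp only [wedge12, hd2, wedge1, ContinuousLinearMap.smul_apply, smul_eq_mul]
      ring

end
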